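/- Let g : ℝⁿ → ℝ ∪ {+∞} be a proper convex function and let ρ > 0. Then the map c ↦ c − (ρ+1)·(∂g + I)^{-1}(c), defined on ⋃_x rb(∂g(x) + x), is well-defined (single-valued), Lipschitz continuous, and maps this set onto ⋃_x rb(∂g(x) − ρx). -/

import Mathlib

open MeasureTheory Set
open scoped NNReal

/-- The convex subdifferential of an extended-real-valued function `g` at a point `x`. -/
noncomputable def subdiff {n : ℕ} (g : EuclideanSpace ℝ (Fin n) → EReal)
    (x : EuclideanSpace ℝ (Fin n)) : Set (EuclideanSpace ℝ (Fin n)) :=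
  {v | g x ≠ ⊤ ∧ g x ≠ ⊥ ∧ ∀ y, g x + ((inner ℝ v (y - x) : ℝ) : EReal) ≤ g y}

variable {n : ℕ}


lemma subdiff_closed (g : EuclideanSpace ℝ (Fin n) → EReal) (x : EuclideanSpace ℝ (Fin n)) :
    IsClosed (subdiff g x) := by
  by_cases ht : g x = ⊤
  · have : subdiff g x = ∅ := by ext v; simp [subdiff, ht]
    rw [this]; exact isClosed_empty
  by_cases hb : g x = ⊥
  · have : subdiff g x = ∅ := by ext v; simp [subdiff, hb]
    rw [this]; exact isClosed_empty
  set a := (g x).toReal with haa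
  have ha : g x = (a : EReal) := (EReal.coe_toReal ht hb).symm
  have : subdiff g x = ⋂ y, {v | ((a + (inner ℝ v (y - x) : ℝ) : ℝ) : EReal) ≤ g y} := by
    ext v
    simp only [subdiff, mem_setOf_eq, mem_iInter, ht, hb, ne_eq, not_false_iff, true_and]
    constructor
    · intro h y; have := h y; rw [ha, ← EReal.coe_add] at this; exact this
    · intro h y; rw [ha, ← EReal.coe_add]; exact h y
  rw [this]
  refine isClosed_iInter fun y => isClosed_le ?_ continuous_const
  exact continuous_coe_real_ereal.comp (continuous_const.add ((continuous_id.inner continuous_const)))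

lemma resolvent_contract {g : EuclideanSpace ℝ (Fin n) → EReal}
    {c c' x x' : EuclideanSpace ℝ (Fin n)}
    (h : c - x ∈ subdiff g x) (h' : c' - x' ∈ subdiff g x') : ‖x - x'‖ ≤ ‖c - c'‖ := by
  obtain ⟨ht, hb, hv⟩ := h
  obtain ⟨ht', hb', hv'⟩ := h'
  set a := (g x).toReal
  set b := (g x').toReal
  have ha : g x = (a : EReal) := (EReal.coe_toReal ht hb).symm
  have hbb : g x' = (b : EReal) := (EReal.coe_toReal ht' hb').symm
  have h1 := hv x'
  have h2 := hv' x
  rw [ha, hbb, ← EReal.coe_add, EReal.coe_le_coe_iff] at h1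
  rw [hbb, ha, ← EReal.coe_add, EReal.coe_le_coe_iff] at h2
  have key : (inner ℝ (c - x) (x' - x) : ℝ) + (inner ℝ (c' - x') (x - x') : ℝ) ≤ 0 := by linarith
  have e1 : (x' - x) = -(x - x') := by abel
  rw [e1, inner_neg_right] at key
  have key2 : (0:ℝ) ≤ (inner ℝ ((c - x) - (c' - x')) (x - x') : ℝ) := by
    rw [inner_sub_left]; linarith
  have e2 : (c - x) - (c' - x') = (c - c') - (x - x') := by abel
  rw [e2, inner_sub_left, real_inner_self_eq_norm_sq] at key2
  have cs : (inner ℝ (c - c') (x - x') : ℝ) ≤ ‖c - c'‖ * ‖x - x'‖ := real_inner_le_norm _ _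
  rcases eq_or_lt_of_le (norm_nonneg (x - x')) with h0 | h0
  · rw [← h0]; exact norm_nonneg _
  · nlinarith

lemma translate_intrinsicFrontier (v : EuclideanSpace ℝ (Fin n))
    (S : Set (EuclideanSpace ℝ (Fin n))) :
    intrinsicFrontier ℝ ((fun u => u + v) '' S) = (fun u => u + v) '' intrinsicFrontier ℝ S := by
  have : (fun u : EuclideanSpace ℝ (Fin n) => u + v) =
      ⇑((AffineIsometryEquiv.constVAdd ℝ (EuclideanSpace ℝ (Fin n)) v).toAffineIsometry) := by
    funext u; simp [add_comm, AffineIsometryEquiv.constVAdd]; rfl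
  rw [this]
  exact AffineIsometry.image_intrinsicFrontier _ _


/-- For a proper convex `g : ℝⁿ → ℝ ∪ {+∞}` and `ρ > 0`, the map
`H : c ↦ c - (ρ+1) • (∂g + I)⁻¹(c)`, defined on `D = ⋃_x rb (∂g(x) + x)`, is
well-defined (the resolvent `(∂g + I)⁻¹` is single-valued and exists on `D`),
Lipschitz continuous, and maps `D` onto `⋃_x rb (∂g(x) - ρx)`. -/
theorem stmt14 {n : ℕ} (g : EuclideanSpace ℝ (Fin n) → EReal)
    (hconv : Convex ℝ {p : EuclideanSpace ℝ (Fin n) × ℝ | g p.1 ≤ (p.2 : EReal)})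
    (hne_bot : ∀ x, g x ≠ ⊥) (hproper : ∃ x, g x ≠ ⊤) (ρ : ℝ) (hρ : 0 < ρ) :
    ∃ s : EuclideanSpace ℝ (Fin n) → EuclideanSpace ℝ (Fin n), ∃ K : ℝ≥0,
      (∀ c ∈ ⋃ x : EuclideanSpace ℝ (Fin n),
          intrinsicFrontier ℝ ((fun v => v + x) '' subdiff g x),
        (c - s c ∈ subdiff g (s c)) ∧ ∀ x, c - x ∈ subdiff g x → x = s c) ∧
      LipschitzOnWith K (fun c => c - (ρ + 1) • s c)
        (⋃ x : EuclideanSpace ℝ (Fin n),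
          intrinsicFrontier ℝ ((fun v => v + x) '' subdiff g x)) ∧
      (fun c => c - (ρ + 1) • s c) ''
          (⋃ x : EuclideanSpace ℝ (Fin n),
            intrinsicFrontier ℝ ((fun v => v + x) '' subdiff g x)) =
        ⋃ x : EuclideanSpace ℝ (Fin n),
          intrinsicFrontier ℝ ((fun v => v - ρ • x) '' subdiff g x) := by
  classical
  set s : EuclideanSpace ℝ (Fin n) → EuclideanSpace ℝ (Fin n) :=
    fun c => if h : ∃ x, c - x ∈ subdiff g x then h.choose else 0 with hs_def
  have hs_spec : ∀ c, (∃ x, c - x ∈ subdiff g x) → c - s c ∈ subdiff g (s c) := by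
    intro c h
    simp only [hs_def, dif_pos h]
    exact h.choose_spec
  have huniq : ∀ (c x x' : EuclideanSpace ℝ (Fin n)),
      c - x ∈ subdiff g x → c - x' ∈ subdiff g x' → x = x' := by
    intro c x x' h h'
    have := resolvent_contract h h'
    rw [sub_self, norm_zero] at this
    have h0 : ‖x - x'‖ = 0 := le_antisymm this (norm_nonneg _)
    rwa [norm_sub_eq_zero_iff] at h0
  have hmem : ∀ (x c : EuclideanSpace ℝ (Fin n)),
      c ∈ intrinsicFrontier ℝ ((fun v => v + x) '' subdiff g x) → c - x ∈ subdiff g x := by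
    intro x c hc
    have hcl : IsClosed ((fun v => v + x) '' subdiff g x) :=
      (Homeomorph.addRight x).isClosedMap _ (subdiff_closed g x)
    obtain ⟨v, hv, hvx⟩ := intrinsicFrontier_subset hcl hc
    rw [← hvx]
    simpa using hv
  have hex_of_mem : ∀ c ∈ ⋃ x : EuclideanSpace ℝ (Fin n),
      intrinsicFrontier ℝ ((fun v => v + x) '' subdiff g x), ∃ x, c - x ∈ subdiff g x := by
    intro c hc
    obtain ⟨x, hx⟩ := mem_iUnion.1 hc
    exact ⟨x, hmem x c hx⟩
  refine ⟨s, (2 + ρ).toNNReal, ?_, ?_, ?_⟩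
  · intro c hc
    have hex := hex_of_mem c hc
    exact ⟨hs_spec c hex, fun x hx => huniq c x (s c) hx (hs_spec c hex)⟩
  · apply LipschitzOnWith.of_dist_le_mul
    intro c hc c' hc'
    have h1 := hs_spec c (hex_of_mem c hc)
    have h2 := hs_spec c' (hex_of_mem c' hc')
    have hcontr := resolvent_contract h1 h2
    have hK : ((2 + ρ).toNNReal : ℝ) = 2 + ρ := Real.coe_toNNReal _ (by linarith)
    rw [dist_eq_norm, dist_eq_norm, hK]
    have e : (c - (ρ + 1) • s c) - (c' - (ρ + 1) • s c') =
        (c - c') - (ρ + 1) • (s c - s c') := by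
      rw [smul_sub]; abel
    rw [e]
    calc ‖(c - c') - (ρ + 1) • (s c - s c')‖
        ≤ ‖c - c'‖ + ‖(ρ + 1) • (s c - s c')‖ := norm_sub_le _ _
      _ = ‖c - c'‖ + |ρ + 1| * ‖s c - s c'‖ := by rw [norm_smul, Real.norm_eq_abs]
      _ ≤ ‖c - c'‖ + (ρ + 1) * ‖c - c'‖ := by
          rw [abs_of_pos (by linarith)]
          have : (ρ + 1) * ‖s c - s c'‖ ≤ (ρ + 1) * ‖c - c'‖ :=
            mul_le_mul_of_nonneg_left hcontr (by linarith)
          linarith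
      _ = (2 + ρ) * ‖c - c'‖ := by ring
  · rw [image_iUnion]
    apply iUnion_congr
    intro x
    rw [translate_intrinsicFrontier, image_image]
    have hsub : (fun v : EuclideanSpace ℝ (Fin n) => v - ρ • x) =
        (fun v : EuclideanSpace ℝ (Fin n) => v + (-(ρ • x))) := by
      ext v; rw [sub_eq_add_neg]
    rw [hsub, translate_intrinsicFrontier]
    apply image_congr
    intro v hv
    have hvS : v ∈ subdiff g x := intrinsicFrontier_subset (subdiff_closed g x) hv
    have hvx : (v + x) - x ∈ subdiff g x := by simpa using hvS
    have hex : ∃ y, (v + x) - y ∈ subdiff g y := ⟨x, hvx⟩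
    have hsx : s (v + x) = x := huniq _ _ _ (hs_spec _ hex) hvx
    show v + x - (ρ + 1) • s (v + x) = v + -(ρ • x)
    rw [hsx, add_smul, one_smul]
    abel
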